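/- arXiv:2205.14068 — 7 statements merged into one kernel-verified Lean document; each statement's English description precedes it below -/
import Mathlib

section
/- Let q be a prime power, F_q the finite field with q elements, and let n, k, ℓ be positive integers. Let G be a k×n matrix over F_q, M an ℓ×k matrix over F_q, E an ℓ×n matrix over F_q, and set R = M·G + E. Let G' be the (k+ℓ)×n block matrix obtained by stacking G on top of R, and let J ⊆ {1,…,n}. If there exists a nonzero a ∈ F_q^ℓ such that the vector a·E vanishes on all coordinates in J, then there exists a nonzero x ∈ F_q^{k+ℓ} such that x·G' vanishes on all coordinates in J and x·G' = a·E; in particular the support of x·G' is contained in the set of indices of nonzero columns of E. -/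
open Matrix

/-
With `R = M * G + E`, the row combination `a` of `R` differs from `a ᵥ* E` by `(a ᵥ* M) ᵥ* G`, a
combination of the rows of `G`. So `x = (-(a ᵥ* M), a)` satisfies `x ᵥ* [G; R] = a ᵥ* E`, and `x`
is nonzero because its `R`-part is `a`. Every claim about `x ᵥ* [G; R]` is then a claim about `a ᵥ* E`.
-/

namespace Matrix

variable {α m k n : Type*}

theorem sumElim_neg_vecMul_vecMul_fromRows_mul_add [Ring α] [Fintype m] [Fintype k]
    (G : Matrix k n α) (M : Matrix m k α) (E : Matrix m n α) (a : m → α) :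
    (-(a ᵥ* M) ⊕ᵥ a) ᵥ* fromRows G (M * G + E) = a ᵥ* E := by
  rw [sumElim_vecMul_fromRows, vecMul_add, neg_vecMul, ← vecMul_vecMul]
  abel

theorem vecMul_apply_eq_zero_of_col_eq_zero [NonUnitalNonAssocSemiring α] [Fintype m]
    (a : m → α) (E : Matrix m n α) {j : n} (hj : ∀ i, E i j = 0) : (a ᵥ* E) j = 0 := by
  simp [vecMul, dotProduct, hj]

theorem support_vecMul_subset [NonUnitalNonAssocSemiring α] [Fintype m]
    (a : m → α) (E : Matrix m n α) :
    {j : n | (a ᵥ* E) j ≠ 0} ⊆ {j : n | ∃ i, E i j ≠ 0} := by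
  intro j hj
  by_contra hcol
  exact hj (vecMul_apply_eq_zero_of_col_eq_zero a E fun i => not_not.mp fun h => hcol ⟨i, h⟩)

end Matrix

theorem interleavedPrange_correctness_general
    {F : Type*} [Field F]
    (n k ℓ : ℕ)
    (G : Matrix (Fin k) (Fin n) F) (M : Matrix (Fin ℓ) (Fin k) F)
    (E : Matrix (Fin ℓ) (Fin n) F) (R : Matrix (Fin ℓ) (Fin n) F)
    (hR : R = M * G + E)
    (J : Finset (Fin n)) (a : Fin ℓ → F) (ha : a ≠ 0)
    (haE : ∀ j ∈ J, (a ᵥ* E) j = 0) :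
    ∃ x : Fin k ⊕ Fin ℓ → F, x ≠ 0 ∧
      (∀ j ∈ J, (x ᵥ* Matrix.fromRows G R) j = 0) ∧
      x ᵥ* Matrix.fromRows G R = a ᵥ* E ∧
      {j : Fin n | (x ᵥ* Matrix.fromRows G R) j ≠ 0}
        ⊆ {j : Fin n | ∃ i, E i j ≠ 0} := by
  have hx : (-(a ᵥ* M) ⊕ᵥ a) ᵥ* fromRows G R = a ᵥ* E := by
    rw [hR]
    exact sumElim_neg_vecMul_vecMul_fromRows_mul_add G M E a
  refine ⟨-(a ᵥ* M) ⊕ᵥ a, ?_, ?_, hx, ?_⟩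
  · intro h
    exact ha (by simpa using congrArg (· ∘ Sum.inr) h)
  · simpa only [hx] using haE
  · simpa only [hx] using support_vecMul_subset a E

/-- Correctness lemma of the Interleaved Prange algorithm: a linear dependency
`a ≠ 0` among the rows of `E` which vanishes on the positions in `J` lifts to a
nonzero vector `x` with `x ᵥ* G'` vanishing on `J` (where `G' = [G; R]` and
`R = M * G + E`) such that `x ᵥ* G' = a ᵥ* E`; in particular the support of
`x ᵥ* G'` is contained in the set of indices of nonzero columns of `E`. -/
theorem interleavedPrange_correctness
    {F : Type*} [Field F] [Fintype F]
    (n k ℓ : ℕ) (hn : 0 < n) (hk : 0 < k) (hℓ : 0 < ℓ)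
    (G : Matrix (Fin k) (Fin n) F) (M : Matrix (Fin ℓ) (Fin k) F)
    (E : Matrix (Fin ℓ) (Fin n) F) (R : Matrix (Fin ℓ) (Fin n) F)
    (hR : R = M * G + E)
    (J : Finset (Fin n)) (a : Fin ℓ → F) (ha : a ≠ 0)
    (haE : ∀ j ∈ J, (a ᵥ* E) j = 0) :
    ∃ x : Fin k ⊕ Fin ℓ → F, x ≠ 0 ∧
      (∀ j ∈ J, (x ᵥ* Matrix.fromRows G R) j = 0) ∧
      x ᵥ* Matrix.fromRows G R = a ᵥ* E ∧
      {j : Fin n | (x ᵥ* Matrix.fromRows G R) j ≠ 0}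
        ⊆ {j : Fin n | ∃ i, E i j ≠ 0} :=
  interleavedPrange_correctness_general n k ℓ G M E R hR J a ha haE
end

section
/- Let q be a prime power, F_q the finite field with q elements, and let n, k, ℓ be positive integers with k+ℓ ≤ n. Let G be a k×n matrix over F_q, M an ℓ×k matrix over F_q, E an ℓ×n matrix over F_q, and set R = M·G + E. Let G' be the (k+ℓ)×n block matrix obtained by stacking G on top of R, and let J ⊆ {1,…,n} with |J| = k+ℓ. If the rows of the ℓ×(k+ℓ) matrix E_J (the columns of E indexed by J) are F_q-linearly dependent, then the (k+ℓ)×(k+ℓ) matrix G'_J (the columns of G' indexed by J) has rank strictly less than k+ℓ. -/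
/-!
Stacking gives `[G; M G + E] = [1; M] G + [0; 1] E`, so by subadditivity of rank the rank of
`G'_J` is at most `rank G_J + rank E_J ≤ k + rank E_J`, and linearly dependent rows force
`rank E_J < ℓ`.
-/

open Matrix

namespace Matrix

variable {k l m n R : Type*} [Field R] [Fintype n]

theorem rank_add_le (A B : Matrix m n R) : (A + B).rank ≤ A.rank + B.rank := by
  rw [rank, mulVecLin_add]
  exact (Submodule.finrank_mono (LinearMap.range_add_le _ _)).trans
    (Submodule.finrank_add_le_finrank_add_finrank _ _)

theorem rank_lt_card_height_of_not_linearIndependent_rows [Fintype m] {A : Matrix m n R}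
    (h : ¬ LinearIndependent R A.row) : A.rank < Fintype.card m := by
  refine A.rank_le_card_height.lt_of_ne fun hcard => h ?_
  exact linearIndependent_iff_card_eq_finrank_span.mpr
    (hcard.symm.trans A.rank_eq_finrank_span_row)

theorem rank_fromRows_mul_add_le [Fintype k] [Fintype l] (G : Matrix k n R) (M : Matrix l k R)
    (E : Matrix l n R) : (fromRows G (M * G + E)).rank ≤ Fintype.card k + E.rank := by
  classical
  have hdecomp : fromRows G (M * G + E) =
      fromRows (1 : Matrix k k R) M * G + fromRows (0 : Matrix k l R) 1 * E := by
    rw [fromRows_mul, fromRows_mul, Matrix.one_mul, Matrix.zero_mul, Matrix.one_mul]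
    ext (i | i) j <;> simp
  calc (fromRows G (M * G + E)).rank
      ≤ (fromRows 1 M * G).rank + (fromRows 0 1 * E).rank := hdecomp ▸ rank_add_le _ _
    _ ≤ G.rank + E.rank := add_le_add (rank_mul_le_right _ _) (rank_mul_le_right _ _)
    _ ≤ Fintype.card k + E.rank := Nat.add_le_add_right G.rank_le_card_height _

end Matrix

theorem interleavedPrange_rank_deficient_general
    {F : Type*} [Field F]
    (n k ℓ : ℕ)
    (G : Matrix (Fin k) (Fin n) F) (M : Matrix (Fin ℓ) (Fin k) F)
    (E : Matrix (Fin ℓ) (Fin n) F) (R : Matrix (Fin ℓ) (Fin n) F)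
    (hR : R = M * G + E)
    (J : Finset (Fin n))
    (hdep : ¬ LinearIndependent F
      (fun i : Fin ℓ => fun j : {x : Fin n // x ∈ J} => E i (j : Fin n))) :
    ((Matrix.fromRows G R).submatrix id
        (fun j : {x : Fin n // x ∈ J} => (j : Fin n))).rank < k + ℓ := by
  set cols : {x : Fin n // x ∈ J} → Fin n := Subtype.val
  have hsplit : (fromRows G R).submatrix id cols =
      fromRows (G.submatrix id cols) (M * G.submatrix id cols + E.submatrix id cols) := by
    subst hR
    ext (i | i) j <;> simp [mul_apply]
  have hE : (E.submatrix id cols).rank < ℓ := by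
    simpa using rank_lt_card_height_of_not_linearIndependent_rows (A := E.submatrix id cols) hdep
  calc ((fromRows G R).submatrix id cols).rank
      ≤ k + (E.submatrix id cols).rank := by
        simpa [hsplit] using rank_fromRows_mul_add_le (G.submatrix id cols) M (E.submatrix id cols)
    _ < k + ℓ := by omega

/-- Rank-deficiency test of the Interleaved Prange algorithm: if the rows of the
submatrix `E_J` (columns of `E` indexed by the `(k+ℓ)`-set `J`) are linearly
dependent, then the `(k+ℓ) × (k+ℓ)` submatrix `G'_J` of `G' = [G; R]` has rank
strictly less than `k + ℓ`. -/
theorem interleavedPrange_rank_deficient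
    {F : Type*} [Field F] [Fintype F] [DecidableEq F]
    (n k ℓ : ℕ) (hn : 0 < n) (hk : 0 < k) (hℓ : 0 < ℓ) (hkl : k + ℓ ≤ n)
    (G : Matrix (Fin k) (Fin n) F) (M : Matrix (Fin ℓ) (Fin k) F)
    (E : Matrix (Fin ℓ) (Fin n) F) (R : Matrix (Fin ℓ) (Fin n) F)
    (hR : R = M * G + E)
    (J : Finset (Fin n)) (hJ : J.card = k + ℓ)
    (hdep : ¬ LinearIndependent F
      (fun i : Fin ℓ => fun j : {x : Fin n // x ∈ J} => E i (j : Fin n))) :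
    ((Matrix.fromRows G R).submatrix id
        (fun j : {x : Fin n // x ∈ J} => (j : Fin n))).rank < k + ℓ :=
  interleavedPrange_rank_deficient_general n k ℓ G M E R hR J hdep
end

section
/- Let q be a prime power, F_q the finite field with q elements, and let n, t, ℓ, m be positive integers with t ≤ n and m ≤ n. Fix a set T ⊆ {1,…,n} with |T| = t. For a subset J ⊆ {1,…,n}, say that an ℓ×t matrix F over F_q (with columns indexed by T) is J-dependent if the rows of the submatrix of F consisting of the columns indexed by J ∩ T are F_q-linearly dependent. Then the sum, over all subsets J of {1,…,n} with |J| = m, of the number of J-dependent matrices F ∈ F_q^{ℓ×t}, equals C(n,m)·q^{ℓt}·∑_{i=0}^{min(t,m)} [C(t,i)·C(n−t, m−i)/C(n,m)]·(1 − ∏_{j=0}^{ℓ−1}(1 − q^{j−i})), where C(·,·) denotes the binomial coefficient. -/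
/-!
Whether `F` is `J`-dependent depends only on the `i = |J ∩ T|` columns indexed by `J ∩ T`; the
remaining columns are free. There are `∏_{j<ℓ} (q^i - q^j) = q^{iℓ} ∏_{j<ℓ} (1 - q^{j-i})`
linearly independent `ℓ`-tuples in `F_q^i` (the product vanishes when `ℓ > i`), so the count for `J` is
`q^{ℓt} (1 - ∏_{j<ℓ} (1 - q^{j-i}))`. Grouping the `m`-subsets `J` by `i`, exactly
`C(t,i) C(n-t,m-i)` of them meet `T` in `i` points.
-/

open Finset

theorem prod_range_pow_sub_pow {F : Type*} [Field F] {x : F} (hx : x ≠ 0) (d ℓ : ℕ) :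
    ∏ j ∈ range ℓ, (x ^ d - x ^ j) = x ^ (d * ℓ) * ∏ j ∈ range ℓ, (1 - x ^ ((j : ℤ) - d)) := by
  have hconst :=
    pow_card_mul_prod (s := range ℓ) (b := x ^ d) (f := fun j => 1 - x ^ ((j : ℤ) - d))
  rw [card_range] at hconst
  rw [pow_mul, hconst]
  refine prod_congr rfl fun j _ => ?_
  rw [mul_one_sub, ← zpow_natCast, ← zpow_natCast, ← zpow_add₀ hx, add_sub_cancel]

section LinearIndependent

variable {K V : Type*} [DivisionRing K] [Fintype K] [AddCommGroup V] [Module K V] [Finite V]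

theorem card_linearIndependent_eq_prod_range (ℓ : ℕ) :
    (Nat.card {s : Fin ℓ → V // LinearIndependent K s} : ℝ) =
      ∏ j ∈ range ℓ, ((Fintype.card K : ℝ) ^ Module.finrank K V - (Fintype.card K : ℝ) ^ j) := by
  by_cases hℓ : ℓ ≤ Module.finrank K V
  · rw [card_linearIndependent hℓ, Fin.prod_univ_eq_prod_range (fun j => _ - _), Nat.cast_prod]
    refine prod_congr rfl fun j hj => ?_
    have : Fintype.card K ^ j ≤ Fintype.card K ^ Module.finrank K V :=
      Nat.pow_le_pow_right Fintype.card_pos (by grind)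
    push_cast [this]
    rfl
  · have : IsEmpty {s : Fin ℓ → V // LinearIndependent K s} :=
      ⟨fun s => hℓ (by simpa using s.2.fintype_card_le_finrank)⟩
    rw [Nat.card_of_isEmpty, Nat.cast_zero, eq_comm]
    exact prod_eq_zero (mem_range.2 (not_le.1 hℓ)) (sub_self _)

theorem card_not_linearIndependent (ℓ : ℕ) :
    (Nat.card {s : Fin ℓ → V // ¬ LinearIndependent K s} : ℝ) =
      (Fintype.card K : ℝ) ^ (Module.finrank K V * ℓ) *
        (1 - ∏ j ∈ range ℓ, (1 - (Fintype.card K : ℝ) ^ ((j : ℤ) - Module.finrank K V))) := by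
  classical
  have htotal := Nat.card_congr (Equiv.sumCompl fun s : Fin ℓ → V => LinearIndependent K s)
  rw [Nat.card_sum, Nat.card_fun, Nat.card_fin, Module.natCard_eq_pow_finrank (K := K) (V := V),
    Nat.card_eq_fintype_card (α := K), ← pow_mul] at htotal
  have hq : (Fintype.card K : ℝ) ≠ 0 := by exact_mod_cast Fintype.card_ne_zero
  rw [mul_one_sub, ← prod_range_pow_sub_pow hq, ← card_linearIndependent_eq_prod_range,
    eq_sub_iff_add_eq', ← Nat.cast_pow, ← htotal, Nat.cast_add]

end LinearIndependent

def Matrix.splitColsEquiv (K : Type*) (ℓ : ℕ) {ι : Type*} (p : ι → Prop) [DecidablePred p] :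
    Matrix (Fin ℓ) ι K ≃ (Fin ℓ → {y // p y} → K) × (Fin ℓ → {y // ¬ p y} → K) :=
  (Equiv.piCongrRight fun _ => Equiv.piEquivPiSubtypeProd p _).trans
    (Equiv.arrowProdEquivProdArrow _ _ _)

theorem card_matrix_rows_restrict_not_linearIndependent {K ι : Type*} [Field K] [Fintype K]
    [Finite ι] (p : ι → Prop) (ℓ : ℕ) :
    (Nat.card {F : Matrix (Fin ℓ) ι K //
        ¬ LinearIndependent K (fun r (j : {y // p y}) => F r j)} : ℝ) =
      (Fintype.card K : ℝ) ^ (ℓ * Nat.card ι) *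
        (1 - ∏ j ∈ range ℓ, (1 - (Fintype.card K : ℝ) ^ ((j : ℤ) - Nat.card {y // p y}))) := by
  classical
  have : Fintype ι := Fintype.ofFinite ι
  let e :
      {F : Matrix (Fin ℓ) ι K // ¬ LinearIndependent K (fun r (j : {y // p y}) => F r j)} ≃
      {x : (Fin ℓ → {y // p y} → K) × (Fin ℓ → {y // ¬ p y} → K) //
        ¬ LinearIndependent K x.1} :=
    (Matrix.splitColsEquiv K ℓ p).subtypeEquiv fun _ => Iff.rfl
  rw [Nat.card_congr (e.trans (Equiv.prodSubtypeFstEquivSubtypeProd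
      (p := fun s => ¬ LinearIndependent K s))), Nat.card_prod, Nat.cast_mul,
    card_not_linearIndependent, Module.finrank_fintype_fun_eq_card]
  have hcols := Nat.card_congr (Equiv.sumCompl p)
  rw [Nat.card_sum] at hcols
  rw [← Nat.card_eq_fintype_card (α := {y // p y}), Nat.card_fun, Nat.card_fun, Nat.card_fin,
    Nat.card_eq_fintype_card (α := K), ← hcols]
  push_cast
  ring

theorem card_filter_card_inter_eq {α : Type*} [Fintype α] [DecidableEq α] (s : Finset α)
    {m i : ℕ} (him : i ≤ m) :
    #{J ∈ ({J : Finset α | #J = m} : Finset (Finset α)) | #(J ∩ s) = i} =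
      (#s).choose i * (#sᶜ).choose (m - i) := by
  rw [← card_powersetCard, ← card_powersetCard, ← card_product]
  have hsplit {A B : Finset α} (hA : A ⊆ s) (hB : Disjoint B s) :
      (A ∪ B) ∩ s = A ∧ (A ∪ B) \ s = B := by
    rw [subset_iff] at hA
    rw [disjoint_left] at hB
    constructor <;> ext x <;> grind
  refine card_nbij' (fun J => (J ∩ s, J \ s)) (fun p => p.1 ∪ p.2) ?_ ?_ ?_ ?_
  · intro J hJ
    simp only [mem_coe, mem_filter, mem_univ, true_and] at hJ
    have := card_sdiff_add_card_inter J s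
    simp only [mem_coe, mem_product, mem_powersetCard, subset_compl_iff_disjoint_right]
    exact ⟨⟨inter_subset_right, hJ.2⟩, sdiff_disjoint, by omega⟩
  · rintro ⟨A, B⟩ hAB
    simp only [mem_coe, mem_product, mem_powersetCard, subset_compl_iff_disjoint_right] at hAB
    obtain ⟨⟨hAs, rfl⟩, hBs, hB⟩ := hAB
    simp only [mem_coe, mem_filter, mem_univ, true_and]
    rw [(hsplit hAs hBs).1, card_union_of_disjoint (disjoint_of_subset_left hAs hBs.symm)]
    omega
  · intro J _
    exact (union_comm _ _).trans (sdiff_union_inter J s)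
  · rintro ⟨A, B⟩ hAB
    simp only [mem_coe, mem_product, mem_powersetCard, subset_compl_iff_disjoint_right] at hAB
    exact Prod.ext_iff.2 (hsplit hAB.1.1 hAB.2.1)

theorem Finset.natCard_subtype_val_mem {α : Type*} [DecidableEq α] (T J : Finset α) :
    Nat.card {y : T // (y : α) ∈ J} = #(J ∩ T) := by
  rw [Nat.card_congr ((Equiv.subtypeSubtypeEquivSubtypeInter (· ∈ T) (· ∈ J)).trans
    (Equiv.subtypeEquivRight fun x => (mem_inter.trans and_comm).symm)), Nat.card_eq_finsetCard]

theorem interleavedPrange_success_count_general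
    {K : Type*} [Field K] [Fintype K]
    (n t ℓ m : ℕ) (hmn : m ≤ n)
    (T : Finset (Fin n)) (hT : T.card = t) :
    (∑ J ∈ (Finset.univ : Finset (Finset (Fin n))).filter (fun J => J.card = m),
        (Nat.card {F : Matrix (Fin ℓ) {x : Fin n // x ∈ T} K //
            ¬ LinearIndependent K
              (fun r : Fin ℓ =>
                fun j : {y : {x : Fin n // x ∈ T} // (y : Fin n) ∈ J} =>
                  F r (j : {x : Fin n // x ∈ T}))} : ℝ))
      = (Nat.choose n m : ℝ) * (Fintype.card K : ℝ) ^ (ℓ * t) *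
          ∑ i ∈ Finset.range (min t m + 1),
            ((Nat.choose t i : ℝ) * (Nat.choose (n - t) (m - i) : ℝ)
                / (Nat.choose n m : ℝ))
              * (1 - ∏ j ∈ Finset.range ℓ,
                  (1 - (Fintype.card K : ℝ) ^ ((j : ℤ) - (i : ℤ)))) := by
  classical
  have hmaps :
      ∀ J ∈ ({J : Finset (Fin n) | #J = m} : Finset _), #(J ∩ T) ∈ range (min t m + 1) :=
    fun J hJ => mem_range_succ_iff.2 (le_min (hT ▸ card_le_card inter_subset_right)
      ((mem_filter.1 hJ).2 ▸ card_le_card inter_subset_left))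
  have hchoose : (n.choose m : ℝ) ≠ 0 := by exact_mod_cast (Nat.choose_pos hmn).ne'
  simp_rw [card_matrix_rows_restrict_not_linearIndependent, Finset.natCard_subtype_val_mem,
    Nat.card_eq_finsetCard, hT]
  rw [← sum_fiberwise_of_maps_to hmaps, mul_sum]
  refine sum_congr rfl fun i hi => ?_
  rw [sum_congr rfl fun J hJ => by rw [(mem_filter.1 hJ).2], sum_const,
    card_filter_card_inter_eq T (mem_range_succ_iff.1 hi |>.trans (min_le_right _ _)),
    card_compl, Fintype.card_fin, hT, nsmul_eq_mul]
  field_simp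
  push_cast
  ring

/-- Success probability of one iteration of the Interleaved Prange algorithm:
the sum, over all `m`-subsets `J` of `{1,…,n}`, of the number of matrices
`F ∈ F_q^{ℓ × t}` (columns indexed by the fixed `t`-set `T`) whose columns
indexed by `J ∩ T` form a matrix with linearly dependent rows, equals
`C(n,m) q^{ℓt} ∑_{i=0}^{min(t,m)} [C(t,i)C(n-t,m-i)/C(n,m)] (1 - ∏_{j<ℓ}(1 - q^{j-i}))`. -/
theorem interleavedPrange_success_count
    {K : Type*} [Field K] [Fintype K]
    (n t ℓ m : ℕ) (hn : 0 < n) (ht : 0 < t) (hℓ : 0 < ℓ) (hm : 0 < m)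
    (htn : t ≤ n) (hmn : m ≤ n)
    (T : Finset (Fin n)) (hT : T.card = t) :
    (∑ J ∈ (Finset.univ : Finset (Finset (Fin n))).filter (fun J => J.card = m),
        (Nat.card {F : Matrix (Fin ℓ) {x : Fin n // x ∈ T} K //
            ¬ LinearIndependent K
              (fun r : Fin ℓ =>
                fun j : {y : {x : Fin n // x ∈ T} // (y : Fin n) ∈ J} =>
                  F r (j : {x : Fin n // x ∈ T}))} : ℝ))
      = (Nat.choose n m : ℝ) * (Fintype.card K : ℝ) ^ (ℓ * t) *
          ∑ i ∈ Finset.range (min t m + 1),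
            ((Nat.choose t i : ℝ) * (Nat.choose (n - t) (m - i) : ℝ)
                / (Nat.choose n m : ℝ))
              * (1 - ∏ j ∈ Finset.range ℓ,
                  (1 - (Fintype.card K : ℝ) ^ ((j : ℤ) - (i : ℤ)))) :=
  interleavedPrange_success_count_general n t ℓ m hmn T hT
end

section
/- Let q ≥ 2 be an integer and let 0 ≤ b ≤ a be integers. Then q^{(a−b)b} ≤ [a choose b]_q ≤ 4·q^{(a−b)b}, where [a choose b]_q denotes the Gaussian binomial coefficient [a choose b]_q = ∏_{j=0}^{b−1} (q^{a−j} − 1)/(q^{b−j} − 1). -/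
/-- The Gaussian binomial coefficient `[a choose b]_q = ∏_{j=0}^{b-1} (q^{a-j} - 1)/(q^{b-j} - 1)`. -/
noncomputable def gaussBinomial (q a b : ℕ) : ℝ :=
  ∏ j ∈ Finset.range b, ((q : ℝ) ^ (a - j) - 1) / ((q : ℝ) ^ (b - j) - 1)

/-!
Writing `k = a - b`, the factors of `[a choose b]_q`, read in reverse order, are
`(q^(k+m) - 1)/(q^m - 1)` for `m = 1, …, b`. Each lies between `q^k` and `q^k / (1 - q^(-m))`,
so `[a choose b]_q` lies between `q^(kb)` and `q^(kb) / ∏_{m ≤ b} (1 - q^(-m))`. The finite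
Euler product satisfies `∏_{m ≤ n} (1 - x^m) ≥ 1 - x - x^2`, which is `≥ 1/4` for `x = 1/q ≤ 1/2`.
-/

open Finset

theorem one_sub_sub_sq_add_pow_le_prod_one_sub_pow {x : ℝ} (hx₀ : 0 ≤ x) (hx₁ : x ≤ 1) (n : ℕ) :
    1 - x - x ^ 2 + x ^ (n + 2) ≤ ∏ i ∈ range (n + 1), (1 - x ^ (i + 1)) := by
  induction n with
  | zero => simp
  | succ n ih =>
    rw [prod_range_succ]
    have hy₀ : 0 ≤ x ^ (n + 2) := pow_nonneg hx₀ _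
    have hy₁ : x ^ (n + 2) ≤ x ^ 2 := pow_le_pow_of_le_one hx₀ hx₁ (by omega)
    have hfactor : 0 ≤ 1 - x ^ (n + 2) := by linarith [pow_le_one₀ hx₀ hx₁ (n := 2)]
    -- `(A + y) (1 - y) = A + x y + y (x^2 - y)` with `A = 1 - x - x^2` and `y = x^(n+2)`
    calc 1 - x - x ^ 2 + x ^ (n + 1 + 2)
        ≤ (1 - x - x ^ 2 + x ^ (n + 2)) * (1 - x ^ (n + 2)) := by
          have hshift : x ^ (n + 1 + 2) = x * x ^ (n + 2) := by ring
          nlinarith [mul_nonneg hy₀ (sub_nonneg.2 hy₁)]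
      _ ≤ _ := mul_le_mul_of_nonneg_right ih hfactor

theorem one_sub_sub_sq_le_prod_one_sub_pow {x : ℝ} (hx₀ : 0 ≤ x) (hx₁ : x ≤ 1) (n : ℕ) :
    1 - x - x ^ 2 ≤ ∏ i ∈ range n, (1 - x ^ (i + 1)) := by
  cases n with
  | zero => rw [range_zero, prod_empty]; nlinarith [sq_nonneg x]
  | succ n =>
    have := one_sub_sub_sq_add_pow_le_prod_one_sub_pow hx₀ hx₁ n
    linarith [pow_nonneg hx₀ (n + 2)]

theorem one_div_four_le_prod_one_sub_inv_pow {Q : ℝ} (hQ : 2 ≤ Q) (n : ℕ) :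
    1 / 4 ≤ ∏ i ∈ range n, (1 - Q⁻¹ ^ (i + 1)) := by
  have hx₀ : 0 ≤ Q⁻¹ := by positivity
  have hx : Q⁻¹ ≤ 1 / 2 := by rw [one_div]; exact inv_anti₀ two_pos hQ
  refine le_trans ?_ (one_sub_sub_sq_le_prod_one_sub_pow hx₀ (by linarith) n)
  nlinarith

theorem pow_le_pow_add_sub_one_div_pow_sub_one {Q : ℝ} (hQ : 1 < Q) (k : ℕ) {m : ℕ}
    (hm : m ≠ 0) : Q ^ k ≤ (Q ^ (k + m) - 1) / (Q ^ m - 1) := by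
  have hden : 0 < Q ^ m - 1 := sub_pos.2 (one_lt_pow₀ hQ hm)
  rw [le_div_iff₀ hden, pow_add]
  nlinarith [one_le_pow₀ (n := k) hQ.le]

theorem pow_add_sub_one_div_pow_sub_one_le {Q : ℝ} (hQ : 1 < Q) (k : ℕ) {m : ℕ}
    (hm : m ≠ 0) : (Q ^ (k + m) - 1) / (Q ^ m - 1) ≤ Q ^ k / (1 - Q⁻¹ ^ m) := by
  have hQm : 0 < Q ^ m := pow_pos (by linarith) m
  have hden : 0 < Q ^ m - 1 := sub_pos.2 (one_lt_pow₀ hQ hm)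
  have hrewrite : Q ^ k / (1 - Q⁻¹ ^ m) = Q ^ (k + m) / (Q ^ m - 1) := by
    rw [inv_pow, pow_add]
    field_simp
  rw [hrewrite]
  exact div_le_div_of_nonneg_right (by linarith) hden.le

theorem gaussBinomial_eq_prod_range {q a b : ℕ} (hba : b ≤ a) :
    gaussBinomial q a b =
      ∏ i ∈ range b, ((q : ℝ) ^ (a - b + (i + 1)) - 1) / ((q : ℝ) ^ (i + 1) - 1) := by
  rw [gaussBinomial, ← prod_range_reflect]
  refine prod_congr rfl fun i hi => ?_
  have hi := mem_range.1 hi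
  rw [show a - (b - 1 - i) = a - b + (i + 1) by omega, show b - (b - 1 - i) = i + 1 by omega]

/-- For `q ≥ 2` and `0 ≤ b ≤ a`:
`q^{(a-b)b} ≤ [a choose b]_q ≤ 4 q^{(a-b)b}`. -/
theorem gaussBinomial_bounds (q a b : ℕ) (hq : 2 ≤ q) (hba : b ≤ a) :
    (q : ℝ) ^ ((a - b) * b) ≤ gaussBinomial q a b ∧
      gaussBinomial q a b ≤ 4 * (q : ℝ) ^ ((a - b) * b) := by
  have hQ : (2 : ℝ) ≤ q := by exact_mod_cast hq
  have hQ₁ : (1 : ℝ) < q := by linarith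
  have hpow : ∏ _i ∈ range b, (q : ℝ) ^ (a - b) = (q : ℝ) ^ ((a - b) * b) := by
    rw [prod_const, card_range, pow_mul]
  have hlower : ∀ i ∈ range b,
      (q : ℝ) ^ (a - b) ≤ ((q : ℝ) ^ (a - b + (i + 1)) - 1) / ((q : ℝ) ^ (i + 1) - 1) :=
    fun i _ => pow_le_pow_add_sub_one_div_pow_sub_one hQ₁ _ i.succ_ne_zero
  rw [gaussBinomial_eq_prod_range hba]
  refine ⟨hpow ▸ prod_le_prod (fun _ _ => by positivity) hlower, ?_⟩
  calc _ ≤ ∏ i ∈ range b, (q : ℝ) ^ (a - b) / (1 - (q : ℝ)⁻¹ ^ (i + 1)) :=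
        prod_le_prod (fun i hi => (pow_nonneg (by positivity) _).trans (hlower i hi))
          fun i _ => pow_add_sub_one_div_pow_sub_one_le hQ₁ _ i.succ_ne_zero
    _ = (q : ℝ) ^ ((a - b) * b) / ∏ i ∈ range b, (1 - (q : ℝ)⁻¹ ^ (i + 1)) := by
        rw [prod_div_distrib, hpow]
    _ ≤ (q : ℝ) ^ ((a - b) * b) / (1 / 4) :=
        div_le_div_of_nonneg_left (by positivity) (by norm_num)
          (one_div_four_le_prod_one_sub_inv_pow hQ b)
    _ = 4 * (q : ℝ) ^ ((a - b) * b) := by ring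
end

section
/- Let q be a prime power, F_q the finite field with q elements, and let n, m, k, d be nonnegative integers with d ≤ m ≤ n, d ≤ k, and k − d ≤ n − m. Let V be an n-dimensional vector space over F_q and let U ⊆ V be a fixed m-dimensional subspace. Then the number of k-dimensional subspaces W of V with dim(W ∩ U) = d equals [n−m choose k−d]_q · [m choose d]_q · q^{(m−d)(k−d)}, where [a choose b]_q denotes the Gaussian binomial coefficient [a choose b]_q = ∏_{j=0}^{b−1} (q^{a−j} − 1)/(q^{b−j} − 1). -/
theorem Nat.card_eq_card_mul_card_fiber {α β : Type*} [Finite α] [Finite β] (f : α → β) {c : ℕ}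
    (hf : ∀ b, Nat.card {a // f a = b} = c) : Nat.card α = Nat.card β * c := by
  have := Fintype.ofFinite β
  rw [← Nat.card_congr (Equiv.sigmaFiberEquiv f), Nat.card_sigma,
    Finset.sum_congr rfl fun b _ => hf b, Finset.sum_const, smul_eq_mul, Finset.card_univ,
    Nat.card_eq_fintype_card]

theorem AddMonoidHom.card_preimage_of_surjective {G H : Type*} [AddGroup G] [AddGroup H]
    [Finite G] (f : G →+ H) (hf : Function.Surjective f) (s : Set H) :
    Nat.card (f ⁻¹' s) = Nat.card s * Nat.card f.ker := by
  have : Finite H := Finite.of_surjective f hf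
  refine Nat.card_eq_card_mul_card_fiber (s.restrictPreimage f) fun y => ?_
  rw [← Nat.card_congr (f.fiberEquivKerOfSurjective hf y)]
  exact Nat.card_congr
    { toFun := fun x => ⟨x.1.1, congrArg Subtype.val x.2⟩
      invFun := fun x => ⟨⟨x.1, by rw [Set.mem_preimage, show f x = y from x.2]; exact y.2⟩,
        Subtype.ext x.2⟩
      left_inv := fun _ => rfl
      right_inv := fun _ => rfl }

open Module LinearMap Submodule

section AdaptedPairs

variable {K V X : Type*} [Field K] [AddCommGroup V] [Module K V] [AddCommGroup X] [Module K X]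

def adaptedPairs (f : V →ₗ[K] X) (d r : ℕ) : Set ((Fin d → V) × (Fin r → V)) :=
  {a | (∀ i, a i ∈ ker f) ∧ LinearIndependent K a} ×ˢ {b | LinearIndependent K (f ∘ b)}

theorem mem_adaptedPairs_comp_iff {W : Type*} [AddCommGroup W] [Module K W] (f : V →ₗ[K] X)
    {g : W →ₗ[K] V} (hg : ker g = ⊥) {d r : ℕ} (a : Fin d → W) (b : Fin r → W) :
    (a, b) ∈ adaptedPairs (f ∘ₗ g) d r ↔ (g ∘ a, g ∘ b) ∈ adaptedPairs f d r := by
  simp only [adaptedPairs, Set.mem_prod, Set.mem_ofPred_eq, ker_comp, mem_comap,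
    g.linearIndependent_iff hg]
  rfl

theorem linearIndependent_sumElim_of_mem_adaptedPairs (f : V →ₗ[K] X) {d r : ℕ}
    {p : (Fin d → V) × (Fin r → V)} (hp : p ∈ adaptedPairs f d r) :
    LinearIndependent K (Sum.elim p.1 p.2) := by
  obtain ⟨⟨ha, hla⟩, hlb⟩ := hp
  refine hla.sum_type (hlb.of_comp f) (Disjoint.mono_left ?_ (range_ker_disjoint hlb).symm)
  exact span_le.2 (Set.range_subset_iff.2 ha)

theorem finrank_ker_comp_subtype (f : V →ₗ[K] X) (W : Submodule K V) :
    finrank K (ker (f ∘ₗ W.subtype)) = finrank K ↥(W ⊓ ker f) := by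
  rw [ker_comp, (W.equivSubtypeMap _).finrank_eq, map_comap_subtype]

theorem finrank_span_inf_ker_of_mem_adaptedPairs (f : V →ₗ[K] X) {d r : ℕ}
    {p : (Fin d → V) × (Fin r → V)} (hp : p ∈ adaptedPairs f d r) :
    finrank K ↥(span K (Set.range (Sum.elim p.1 p.2)) ⊓ ker f) = d := by
  set T := span K (Set.range (Sum.elim p.1 p.2))
  have : FiniteDimensional K T := FiniteDimensional.span_of_finite K (Set.finite_range _)
  have hT : finrank K T = d + r := by
    rw [finrank_span_eq_card (linearIndependent_sumElim_of_mem_adaptedPairs f hp)]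
    simp
  have hmap : range (f ∘ₗ T.subtype) = span K (Set.range (f ∘ p.2)) := by
    have hfa : f ∘ p.1 = 0 := funext fun i => hp.1.1 i
    rw [range_comp, range_subtype, Submodule.map_span, ← Set.range_comp, Sum.comp_elim, hfa,
      Set.Sum.elim_range, span_union, sup_eq_right, span_le, Set.range_subset_iff]
    exact fun _ => zero_mem _
  have := (f ∘ₗ T.subtype).finrank_range_add_finrank_ker
  rw [hmap, finrank_span_eq_card hp.2, Fintype.card_fin, finrank_ker_comp_subtype, hT] at this
  omega

theorem span_sumElim_eq_of_mem_adaptedPairs (f : V →ₗ[K] X) {d r : ℕ}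
    {p : (Fin d → V) × (Fin r → V)} (hp : p ∈ adaptedPairs f d r) {W : Submodule K V}
    [FiniteDimensional K W] (hW : finrank K W = d + r) (hpW : ∀ x, Sum.elim p.1 p.2 x ∈ W) :
    span K (Set.range (Sum.elim p.1 p.2)) = W := by
  refine eq_of_le_of_finrank_eq (span_le.2 (Set.range_subset_iff.2 hpW)) ?_
  rw [finrank_span_eq_card (linearIndependent_sumElim_of_mem_adaptedPairs f hp), hW]
  simp

theorem card_adaptedPairs_span_eq [FiniteDimensional K V] (f : V →ₗ[K] X) {d r : ℕ}
    (W : Submodule K V) (hW : finrank K W = d + r) :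
    Nat.card {p : adaptedPairs f d r // span K (Set.range (Sum.elim p.1.1 p.1.2)) = W} =
      Nat.card (adaptedPairs (f ∘ₗ W.subtype) d r) := by
  refine Nat.card_congr
    { toFun := fun p => ⟨(fun i => ⟨p.1.1.1 i, ?_⟩, fun j => ⟨p.1.1.2 j, ?_⟩),
        (mem_adaptedPairs_comp_iff f W.ker_subtype _ _).2 p.1.2⟩
      invFun := fun p => ⟨⟨(W.subtype ∘ p.1.1, W.subtype ∘ p.1.2),
          (mem_adaptedPairs_comp_iff f W.ker_subtype _ _).1 p.2⟩,
        span_sumElim_eq_of_mem_adaptedPairs f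
          ((mem_adaptedPairs_comp_iff f W.ker_subtype _ _).1 p.2) hW
          (Sum.rec (fun i => (p.1.1 i).2) (fun j => (p.1.2 j).2))⟩
      left_inv := fun _ => rfl
      right_inv := fun _ => rfl }
  · exact p.2.le (subset_span (Set.mem_range_self (Sum.inl i)))
  · exact p.2.le (subset_span (Set.mem_range_self (Sum.inr j)))

variable [Fintype K] [Finite V]

local notation "q" => Fintype.card K

theorem card_linearIndependent_of_forall_mem (S : Submodule K V) {d : ℕ}
    (hd : d ≤ finrank K S) :
    Nat.card {a : Fin d → V // (∀ i, a i ∈ S) ∧ LinearIndependent K a} =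
      ∏ i : Fin d, (q ^ finrank K S - q ^ i.val) := by
  rw [← card_linearIndependent hd, ← Nat.card_congr (Equiv.subtypeSubtypeEquivSubtypeInter _ _)]
  exact Nat.card_congr <| Equiv.subtypeEquiv Equiv.subtypePiEquivPi fun a =>
    S.subtype.linearIndependent_iff (v := Equiv.subtypePiEquivPi a) S.ker_subtype

theorem card_linearIndependent_comp (f : V →ₗ[K] X) {r : ℕ} (hr : r ≤ finrank K (range f)) :
    Nat.card {b : Fin r → V // LinearIndependent K (f ∘ b)} =
      (∏ i : Fin r, (q ^ finrank K (range f) - q ^ i.val)) * q ^ (finrank K (ker f) * r) := by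
  set F := (f.rangeRestrict.compLeft (Fin r)).toAddMonoidHom
  have hF : Function.Surjective F := f.surjective_rangeRestrict.comp_left
  have hker : Nat.card F.ker = Nat.card (Fin r → ker f) := by
    refine Nat.card_congr ((Equiv.subtypeEquivRight fun b => ?_).trans Equiv.subtypePiEquivPi)
    simp [F, funext_iff, Subtype.ext_iff]
  have hli (b : Fin r → V) :
      LinearIndependent K (f ∘ b) ↔ b ∈ F ⁻¹' {c | LinearIndependent K c} :=
    (range f).subtype.linearIndependent_iff (v := F b) (range f).ker_subtype
  have : Finite (range f) := Finite.of_surjective _ f.surjective_rangeRestrict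
  rw [Nat.card_congr (Equiv.subtypeEquivRight hli), F.card_preimage_of_surjective hF,
    Set.coe_ofPred, card_linearIndependent hr, hker, Nat.card_fun,
    Module.natCard_eq_pow_finrank (K := K), Nat.card_eq_fintype_card, Nat.card_eq_fintype_card,
    Fintype.card_fin, pow_mul]

theorem card_adaptedPairs (f : V →ₗ[K] X) {d r : ℕ} (hd : d ≤ finrank K (ker f))
    (hr : r ≤ finrank K (range f)) :
    Nat.card (adaptedPairs f d r) =
      (∏ i : Fin d, (q ^ finrank K (ker f) - q ^ i.val)) *
        ((∏ i : Fin r, (q ^ finrank K (range f) - q ^ i.val)) * q ^ (finrank K (ker f) * r)) := by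
  rw [adaptedPairs, Nat.card_congr (Equiv.Set.prod _ _), Nat.card_prod, Set.coe_ofPred,
    Set.coe_ofPred, card_linearIndependent_of_forall_mem _ hd, card_linearIndependent_comp f hr]

theorem card_subspaces_finrank_inf_ker_mul (f : V →ₗ[K] X) (d r : ℕ) :
    Nat.card {W : Submodule K V // finrank K W = d + r ∧ finrank K ↥(W ⊓ ker f) = d} *
        ((∏ i : Fin d, (q ^ d - q ^ i.val)) *
          ((∏ i : Fin r, (q ^ r - q ^ i.val)) * q ^ (d * r))) =
      Nat.card (adaptedPairs f d r) := by
  have : Finite (Submodule K V) := Finite.of_injective _ SetLike.coe_injective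
  let spanOf (p : adaptedPairs f d r) :
      {W : Submodule K V // finrank K W = d + r ∧ finrank K ↥(W ⊓ ker f) = d} :=
    ⟨span K (Set.range (Sum.elim p.1.1 p.1.2)), by
      rw [finrank_span_eq_card (linearIndependent_sumElim_of_mem_adaptedPairs f p.2)]; simp,
      finrank_span_inf_ker_of_mem_adaptedPairs f p.2⟩
  refine (Nat.card_eq_card_mul_card_fiber spanOf fun W => ?_).symm
  have hker : finrank K (ker (f ∘ₗ W.1.subtype)) = d := by
    rw [finrank_ker_comp_subtype, W.2.2]
  have hrange : finrank K (range (f ∘ₗ W.1.subtype)) = r := by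
    have := (f ∘ₗ W.1.subtype).finrank_range_add_finrank_ker
    omega
  calc Nat.card {p // spanOf p = W}
      _ = Nat.card {p : adaptedPairs f d r // span K (Set.range (Sum.elim p.1.1 p.1.2)) = W} :=
        Nat.card_congr (Equiv.subtypeEquivRight fun _ => Subtype.ext_iff)
      _ = Nat.card (adaptedPairs (f ∘ₗ W.1.subtype) d r) := card_adaptedPairs_span_eq f W W.2.1
      _ = _ := by rw [card_adaptedPairs _ hker.ge hrange.ge, hker, hrange]

end AdaptedPairs

theorem prod_pow_sub_pow_ne_zero {q : ℕ} (hq : 1 < q) {s t : ℕ} (hst : s ≤ t) :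
    ∏ i : Fin s, (q ^ t - q ^ i.val) ≠ 0 :=
  Finset.prod_ne_zero_iff.2 fun i _ =>
    Nat.sub_ne_zero_of_lt (Nat.pow_lt_pow_right hq (i.2.trans_le hst))

theorem gaussBinomial_mul_prod_pow_sub_pow {q : ℕ} (hq : 1 < q) {s t : ℕ} (hst : s ≤ t) :
    gaussBinomial q t s * ((∏ i : Fin s, (q ^ s - q ^ i.val) : ℕ) : ℝ) =
      ((∏ i : Fin s, (q ^ t - q ^ i.val) : ℕ) : ℝ) := by
  have hq' : (1 : ℝ) < q := by exact_mod_cast hq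
  have hsplit : ∀ {u : ℕ} (i : Fin s), s ≤ u →
      ((q ^ u - q ^ i.val : ℕ) : ℝ) = (q : ℝ) ^ i.val * ((q : ℝ) ^ (u - i) - 1) := by
    intro u i hu
    rw [Nat.cast_sub (Nat.pow_le_pow_right hq.le (by omega)), mul_sub, mul_one, ← pow_add,
      Nat.add_sub_cancel' (by omega)]
    push_cast
    ring
  rw [gaussBinomial, ← Fin.prod_univ_eq_prod_range, Nat.cast_prod, Nat.cast_prod,
    ← Finset.prod_mul_distrib]
  refine Finset.prod_congr rfl fun i _ => ?_
  have hne : (q : ℝ) ^ (s - i.val) - 1 ≠ 0 := (sub_pos.2 (one_lt_pow₀ hq' (by omega))).ne'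
  rw [hsplit i le_rfl, hsplit i hst]
  field_simp

theorem card_subspaces_with_fixed_intersection_dim_general
    {K V : Type*} [Field K] [Fintype K] [AddCommGroup V] [Module K V]
    [FiniteDimensional K V]
    (n m k d : ℕ) (hdm : d ≤ m) (hdk : d ≤ k) (hkd : k - d ≤ n - m)
    (hV : Module.finrank K V = n)
    (U : Submodule K V) (hU : Module.finrank K U = m) :
    (Nat.card {W : Submodule K V //
        Module.finrank K W = k ∧ Module.finrank K ↥(W ⊓ U) = d} : ℝ)
      = gaussBinomial (Fintype.card K) (n - m) (k - d)
          * gaussBinomial (Fintype.card K) m d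
          * (Fintype.card K : ℝ) ^ ((m - d) * (k - d)) := by
  have : Finite V := Module.finite_of_finite K
  have hq : 1 < Fintype.card K := Fintype.one_lt_card
  obtain ⟨r, rfl⟩ : ∃ r, k = d + r := ⟨k - d, by omega⟩
  rw [Nat.add_sub_cancel_left] at hkd ⊢
  have hQ : finrank K (range U.mkQ) = n - m := by
    have := U.finrank_quotient_add_finrank
    rw [range_mkQ, finrank_top]
    omega
  have hcount := card_subspaces_finrank_inf_ker_mul U.mkQ d r
  rw [card_adaptedPairs _ (by rwa [ker_mkQ, hU]) (by rwa [hQ]), ker_mkQ, hU, hQ] at hcount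
  have hfiber : (∏ i : Fin d, (Fintype.card K ^ d - Fintype.card K ^ i.val)) *
      ((∏ i : Fin r, (Fintype.card K ^ r - Fintype.card K ^ i.val)) *
        Fintype.card K ^ (d * r)) ≠ 0 :=
    mul_ne_zero (prod_pow_sub_pow_ne_zero hq le_rfl)
      (mul_ne_zero (prod_pow_sub_pow_ne_zero hq le_rfl) (pow_ne_zero _ (by omega)))
  refine mul_right_cancel₀ (Nat.cast_ne_zero.2 hfiber) ?_
  rw [← Nat.cast_mul, hcount]
  simp only [Nat.cast_mul, Nat.cast_pow]
  rw [← gaussBinomial_mul_prod_pow_sub_pow hq hdm, ← gaussBinomial_mul_prod_pow_sub_pow hq hkd,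
    show m * r = (m - d) * r + d * r by rw [← add_mul, Nat.sub_add_cancel hdm], pow_add]
  ring

/-- In an `n`-dimensional vector space `V` over `F_q` with a fixed `m`-dimensional
subspace `U`, the number of `k`-dimensional subspaces `W` with `dim(W ∩ U) = d`
equals `[n-m choose k-d]_q · [m choose d]_q · q^{(m-d)(k-d)}`. -/
theorem card_subspaces_with_fixed_intersection_dim
    {K V : Type*} [Field K] [Fintype K] [AddCommGroup V] [Module K V]
    [FiniteDimensional K V]
    (n m k d : ℕ) (hdm : d ≤ m) (hmn : m ≤ n) (hdk : d ≤ k) (hkd : k - d ≤ n - m)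
    (hV : Module.finrank K V = n)
    (U : Submodule K V) (hU : Module.finrank K U = m) :
    (Nat.card {W : Submodule K V //
        Module.finrank K W = k ∧ Module.finrank K ↥(W ⊓ U) = d} : ℝ)
      = gaussBinomial (Fintype.card K) (n - m) (k - d)
          * gaussBinomial (Fintype.card K) m d
          * (Fintype.card K : ℝ) ^ ((m - d) * (k - d)) :=
  card_subspaces_with_fixed_intersection_dim_general n m k d hdm hdk hkd hV U hU
end

section
/- Let q be a prime power, F_q the finite field with q elements, and let k, ℓ be positive integers. Fix a subspace U ⊆ F_q^{k+ℓ} with dim U = ℓ, and let p be an integer with 0 ≤ p ≤ min(k, ℓ). Then the number of k×(k+ℓ) matrices G over F_q of rank k whose row space W satisfies dim(W ∩ U) = p equals ∏_{j=0}^{k−1}(q^k − q^j) · [ℓ choose p]_q · [k choose k−p]_q · q^{(ℓ−p)(k−p)}, where [a choose b]_q denotes the Gaussian binomial coefficient [a choose b]_q = ∏_{j=0}^{b−1} (q^{a−j} − 1)/(q^{b−j} − 1). -/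
open Matrix

/-!
A `k × (k + ℓ)` matrix `G` of rank `k` is the same as an injective linear map
`φ = (x ↦ x ᵥ* G) : K^k → K^(k+ℓ)`, whose range is the row space of `G`. Choosing a complement `C`
of `U` and writing `φ = a + b` with `a : K^k → U` and `b : K^k → C`, we get `ker φ = ker a ⊓ ker b`
and `range φ ⊓ U = a (ker b)`. So the conditions say that `P = ker b` has dimension `p` and that
`a` is injective on `P`. There are `[k, p]_q` choices of `P`; then `b` is an injective map
`K^k ⧸ P → C`, and `a` is an injective map on `P` extended arbitrarily to a complement of `P`.
The resulting product is rearranged with `[a, b]_q · ∏_{j<b} (q^b - q^j) = ∏_{j<b} (q^a - q^j)`.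
-/

open Module LinearMap Function

theorem Nat.card_subtype_eq_card_mul_of_card_fiber {α β : Type*} [Finite α] [Finite β]
    (f : α → β) (r : α → Prop) (s : β → Prop) (hrs : ∀ a, r a → s (f a)) (c : ℕ)
    (hc : ∀ b, s b → Nat.card {a // r a ∧ f a = b} = c) :
    Nat.card {a // r a} = Nat.card {b // s b} * c := by
  let e : {a // r a} ≃ Σ b : {b // s b}, {a // r a ∧ f a = b} :=
    { toFun := fun a => ⟨⟨f a, hrs a a.2⟩, a, a.2, rfl⟩
      invFun := fun x => ⟨x.2.1, x.2.2.1⟩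
      left_inv := fun _ => rfl
      right_inv := by
        rintro ⟨⟨b, hb⟩, a, ha, hab⟩
        change f a = b at hab
        subst hab
        rfl }
  have := Fintype.ofFinite {b // s b}
  rw [Nat.card_congr e, Nat.card_sigma, Finset.sum_congr rfl fun (b : {b // s b}) _ => hc b.1 b.2,
    Finset.sum_const, Finset.card_univ, Nat.card_eq_fintype_card, smul_eq_mul]

theorem Nat.cast_prod_range_pow_sub_pow {c : ℕ} (hc : 1 ≤ c) {m n : ℕ} (h : m ≤ n) :
    ((∏ j ∈ Finset.range m, (c ^ n - c ^ j) : ℕ) : ℝ) =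
      ∏ j ∈ Finset.range m, ((c : ℝ) ^ n - (c : ℝ) ^ j) := by
  push_cast
  refine Finset.prod_congr rfl fun j hj => ?_
  rw [Nat.cast_sub (Nat.pow_le_pow_right hc ((Finset.mem_range.mp hj).le.trans h)), Nat.cast_pow,
    Nat.cast_pow]

theorem gaussBinomial_mul_prod {q : ℕ} (hq : 1 < q) {a b : ℕ} (h : b ≤ a) :
    gaussBinomial q a b * ∏ j ∈ Finset.range b, ((q : ℝ) ^ b - (q : ℝ) ^ j) =
      ∏ j ∈ Finset.range b, ((q : ℝ) ^ a - (q : ℝ) ^ j) := by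
  rw [gaussBinomial, ← Finset.prod_mul_distrib]
  refine Finset.prod_congr rfl fun j hj => ?_
  have hj : j < b := Finset.mem_range.mp hj
  have hden : (q : ℝ) ^ (b - j) - 1 ≠ 0 :=
    sub_ne_zero.mpr (one_lt_pow₀ (by exact_mod_cast hq) (by omega)).ne'
  rw [div_mul_eq_mul_div, div_eq_iff hden, ← pow_sub_mul_pow (q : ℝ) (h.trans' hj.le),
    ← pow_sub_mul_pow (q : ℝ) hj.le]
  ring

theorem prod_range_pow_sub_pow_eq_mul {Q : ℝ} {p k : ℕ} (h : p ≤ k) :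
    ∏ j ∈ Finset.range k, (Q ^ k - Q ^ j) =
      (∏ j ∈ Finset.range p, (Q ^ k - Q ^ j)) * Q ^ (p * (k - p)) *
        ∏ j ∈ Finset.range (k - p), (Q ^ (k - p) - Q ^ j) := by
  obtain ⟨m, rfl⟩ := Nat.exists_eq_add_of_le h
  have hshift (i : ℕ) : Q ^ (p + m) - Q ^ (p + i) = Q ^ p * (Q ^ m - Q ^ i) := by ring
  rw [Nat.add_sub_cancel_left, Finset.prod_range_add, Finset.prod_congr rfl fun i _ => hshift i,
    Finset.prod_mul_distrib, Finset.prod_const, Finset.card_range, ← pow_mul, mul_assoc]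

section Complement

variable {R V W : Type*} [Ring R] [AddCommGroup V] [Module R V] [AddCommGroup W] [Module R W]

theorem LinearMap.finrank_map_eq_of_disjoint_ker {f : V →ₗ[R] W} {P : Submodule R V}
    (h : Disjoint P (ker f)) : finrank R (P.map f) = finrank R P := by
  rw [← range_domRestrict, finrank_range_of_inj (injective_domRestrict_iff.mpr h)]

namespace Submodule

variable {U C : Submodule R W} (h : IsCompl U C) (a : V →ₗ[R] U) (b : V →ₗ[R] C)

theorem ker_prodEquivOfIsCompl_comp_prod :
    ker ((U.prodEquivOfIsCompl C h).toLinearMap ∘ₗ a.prod b) = ker a ⊓ ker b := by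
  rw [LinearEquiv.ker_comp, ker_prod]

theorem range_prodEquivOfIsCompl_comp_prod_inf :
    range ((U.prodEquivOfIsCompl C h).toLinearMap ∘ₗ a.prod b) ⊓ U =
      (ker b).map (U.subtype ∘ₗ a) := by
  ext w
  simp only [mem_inf, mem_range, mem_map, mem_ker, LinearMap.comp_apply, LinearEquiv.coe_coe,
    LinearMap.prod_apply, Function.prod_apply, coe_prodEquivOfIsCompl', subtype_apply]
  constructor
  · rintro ⟨⟨x, rfl⟩, hx⟩
    have hbU : (b x : W) ∈ U := by simpa using U.sub_mem hx (a x).2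
    have hb : (b x : W) = 0 := disjoint_def.mp h.disjoint _ hbU (b x).2
    exact ⟨x, Subtype.ext hb, by rw [hb, add_zero]⟩
  · rintro ⟨x, hx, rfl⟩
    exact ⟨⟨x, by rw [hx, ZeroMemClass.coe_zero, add_zero]⟩, (a x).2⟩

end Submodule

end Complement

section Counting

variable {K V W : Type*} [Field K] [Fintype K] [AddCommGroup V] [Module K V] [AddCommGroup W]
  [Module K W] [Finite V] [Finite W]

local notation "q" => Fintype.card K

instance : Finite (V →ₗ[K] W) := Module.finite_of_finite K

theorem card_linearMap : Nat.card (V →ₗ[K] W) = q ^ (finrank K V * finrank K W) := by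
  rw [Module.natCard_eq_pow_finrank (K := K), finrank_linearMap, Nat.card_eq_fintype_card]

theorem card_injective_linearMap (h : finrank K V ≤ finrank K W) :
    Nat.card {f : V →ₗ[K] W // Injective f} =
      ∏ j ∈ Finset.range (finrank K V), (q ^ finrank K W - q ^ j) := by
  let b := Module.finBasis K V
  have hli (s : Fin (finrank K V) → W) : LinearIndependent K s ↔ Injective (b.constr K s) :=
    ⟨b.injective_constr_of_linearIndependent, fun hs => by
      simpa [Function.comp_def, b.constr_basis] using
        b.linearIndependent.map' _ (ker_eq_bot.mpr hs)⟩
  rw [← Nat.card_congr ((b.constr K).toEquiv.subtypeEquiv hli), card_linearIndependent h,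
    Fin.prod_univ_eq_prod_range (fun j => q ^ finrank K W - q ^ j)]

theorem card_disjoint_ker (P : Submodule K V) (h : finrank K P ≤ finrank K W) :
    Nat.card {f : V →ₗ[K] W // Disjoint P (ker f)} =
      (∏ j ∈ Finset.range (finrank K P), (q ^ finrank K W - q ^ j)) *
        q ^ ((finrank K V - finrank K P) * finrank K W) := by
  obtain ⟨D, hPD⟩ := P.exists_isCompl
  let e : (V →ₗ[K] W) ≃ (P →ₗ[K] W) × (D →ₗ[K] W) :=
    (((P.prodEquivOfIsCompl D hPD).symm.arrowCongr (LinearEquiv.refl K W)).trans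
      (coprodEquiv K).symm).toEquiv
  have he (f : V →ₗ[K] W) : (e f).1 = f.domRestrict P := by
    ext x; simp [e, Submodule.coe_prodEquivOfIsCompl']
  have hD : finrank K D = finrank K V - finrank K P := by
    have := P.finrank_add_eq_of_isCompl hPD
    omega
  have hdisj (f : V →ₗ[K] W) : Disjoint P (ker f) ↔ Injective (e f).1 := by
    rw [he, injective_domRestrict_iff]
  rw [Nat.card_congr ((e.subtypeEquiv hdisj).trans
      (@Equiv.prodSubtypeFstEquivSubtypeProd _ _ fun g : P →ₗ[K] W => Injective g)),
    Nat.card_prod, card_injective_linearMap h, card_linearMap, hD]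

theorem card_submodule_finrank_eq_mul_prod {m : ℕ} (hm : m ≤ finrank K V) :
    Nat.card {P : Submodule K V // finrank K P = m} * ∏ j ∈ Finset.range m, (q ^ m - q ^ j) =
      ∏ j ∈ Finset.range m, (q ^ finrank K V - q ^ j) := by
  have hinj := card_injective_linearMap (K := K) (V := Fin m → K) (W := V)
    (by rwa [finrank_fin_fun])
  rw [finrank_fin_fun] at hinj
  rw [← hinj]
  refine (Nat.card_subtype_eq_card_mul_of_card_fiber range (fun f => Injective f)
    (fun P => finrank K P = m) (fun f hf => by rw [finrank_range_of_inj hf, finrank_fin_fun])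
    _ ?_).symm
  intro P hP
  let e : {f : (Fin m → K) →ₗ[K] V // Injective f ∧ range f = P} ≃
      {g : (Fin m → K) →ₗ[K] P // Injective g} :=
    { toFun := fun f => ⟨f.1.codRestrict P fun x => f.2.2.le (mem_range_self f.1 x),
        fun x y hxy => f.2.1 (congrArg Subtype.val hxy)⟩
      invFun := fun g =>
        have hg : Injective (P.subtype ∘ₗ g.1) := by
          rw [coe_comp]; exact P.injective_subtype.comp g.2
        ⟨P.subtype ∘ₗ g.1, hg, Submodule.eq_of_le_of_finrank_eq
          (by rintro _ ⟨x, rfl⟩; exact (g.1 x).2)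
          (by rw [finrank_range_of_inj hg, finrank_fin_fun, hP])⟩
      left_inv := fun _ => rfl
      right_inv := fun _ => rfl }
  rw [Nat.card_congr e, card_injective_linearMap (by rw [finrank_fin_fun, hP]), finrank_fin_fun,
    hP]

theorem card_finrank_ker_eq {p : ℕ} (hp : finrank K V - p ≤ finrank K W) :
    Nat.card {f : V →ₗ[K] W // finrank K (ker f) = p} =
      Nat.card {P : Submodule K V // finrank K P = p} *
        ∏ j ∈ Finset.range (finrank K V - p), (q ^ finrank K W - q ^ j) := by
  refine Nat.card_subtype_eq_card_mul_of_card_fiber ker _ (fun P => finrank K P = p)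
    (fun _ h => h) _ ?_
  rintro P rfl
  have : Finite (V ⧸ P) := Module.finite_of_finite K
  let e : {f : V →ₗ[K] W // finrank K (ker f) = finrank K P ∧ ker f = P} ≃
      {g : V ⧸ P →ₗ[K] W // Injective g} :=
    { toFun := fun f => ⟨P.liftQ f.1 f.2.2.ge, by
        rw [← ker_eq_bot]; exact Submodule.ker_liftQ_eq_bot _ _ _ f.2.2.le⟩
      invFun := fun g =>
        have hker : ker (g.1 ∘ₗ P.mkQ) = P := by
          rw [ker_comp, ker_eq_bot.mpr g.2, Submodule.comap_bot, Submodule.ker_mkQ]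
        ⟨g.1 ∘ₗ P.mkQ, by rw [hker], hker⟩
      left_inv := fun f => Subtype.ext (P.liftQ_mkQ _ _)
      right_inv := fun g => Subtype.ext (P.linearMap_qext (P.liftQ_mkQ _ _)) }
  rw [Nat.card_congr e, card_injective_linearMap (by rwa [Submodule.finrank_quotient]),
    Submodule.finrank_quotient]

theorem card_injective_finrank_range_inf_eq (U : Submodule K W) {p : ℕ} (hpU : p ≤ finrank K U)
    (hcodim : finrank K V - p ≤ finrank K W - finrank K U) :
    Nat.card {φ : V →ₗ[K] W // Injective φ ∧ finrank K ↥(range φ ⊓ U) = p} =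
      Nat.card {P : Submodule K V // finrank K P = p} *
        (∏ j ∈ Finset.range (finrank K V - p), (q ^ (finrank K W - finrank K U) - q ^ j)) *
        ((∏ j ∈ Finset.range p, (q ^ finrank K U - q ^ j)) *
          q ^ ((finrank K V - p) * finrank K U)) := by
  obtain ⟨C, hUC⟩ := U.exists_isCompl
  have hC : finrank K C = finrank K W - finrank K U := by
    have := U.finrank_add_eq_of_isCompl hUC
    omega
  let E : (V →ₗ[K] U) × (V →ₗ[K] C) ≃ (V →ₗ[K] W) :=
    ((prodEquiv K).trans (LinearEquiv.congrRight (U.prodEquivOfIsCompl C hUC))).toEquiv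
  have hE (x : (V →ₗ[K] U) × (V →ₗ[K] C)) :
      E x = (U.prodEquivOfIsCompl C hUC).toLinearMap ∘ₗ x.1.prod x.2 := rfl
  have hcond (x : (V →ₗ[K] U) × (V →ₗ[K] C)) :
      (Disjoint (ker x.2) (ker x.1) ∧ finrank K (ker x.2) = p) ↔
        (Injective (E x) ∧ finrank K ↥(range (E x) ⊓ U) = p) := by
    rw [← ker_eq_bot, hE, Submodule.ker_prodEquivOfIsCompl_comp_prod,
      Submodule.range_prodEquivOfIsCompl_comp_prod_inf, ← disjoint_iff, disjoint_comm]
    refine and_congr_right fun hx => ?_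
    rw [finrank_map_eq_of_disjoint_ker
      (by rw [ker_comp_of_ker_eq_bot _ U.ker_subtype]; exact hx.symm)]
  rw [← Nat.card_congr (E.subtypeEquiv hcond),
    Nat.card_subtype_eq_card_mul_of_card_fiber Prod.snd _ (fun b => finrank K (ker b) = p)
      (fun _ h => h.2) _ ?_, card_finrank_ker_eq (by rwa [hC]), hC]
  intro b hb
  let e : {x : (V →ₗ[K] U) × (V →ₗ[K] C) //
        (Disjoint (ker x.2) (ker x.1) ∧ finrank K (ker x.2) = p) ∧ x.2 = b} ≃
      {a : V →ₗ[K] U // Disjoint (ker b) (ker a)} :=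
    { toFun := fun x => ⟨x.1.1, by have h := x.2.1.1; rwa [x.2.2] at h⟩
      invFun := fun a => ⟨(a.1, b), ⟨a.2, hb⟩, rfl⟩
      left_inv := by rintro ⟨⟨a, b'⟩, h, rfl⟩; rfl
      right_inv := fun _ => rfl }
  rw [Nat.card_congr e, card_disjoint_ker _ (by rwa [hb]), hb]

theorem card_submodule_finrank_eq_gaussBinomial {p : ℕ} (hp : p ≤ finrank K V) :
    (Nat.card {P : Submodule K V // finrank K P = p} : ℝ) = gaussBinomial q (finrank K V) p := by
  have hq : 1 < q := Fintype.one_lt_card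
  have hprod : ∏ j ∈ Finset.range p, ((q : ℝ) ^ p - (q : ℝ) ^ j) ≠ 0 :=
    Finset.prod_ne_zero_iff.mpr fun j hj => sub_ne_zero.mpr
      (pow_lt_pow_right₀ (by exact_mod_cast hq) (Finset.mem_range.mp hj)).ne'
  refine mul_right_cancel₀ hprod ?_
  rw [gaussBinomial_mul_prod hq hp, ← Nat.cast_prod_range_pow_sub_pow hq.le le_rfl,
    ← Nat.cast_prod_range_pow_sub_pow hq.le hp, ← Nat.cast_mul,
    card_submodule_finrank_eq_mul_prod hp]

end Counting

section RowSpace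

variable {K : Type*} [Field K] {m : ℕ} {n : Type*} [Fintype n]

theorem Matrix.rank_eq_iff_injective_vecMul (G : Matrix (Fin m) n K) :
    G.rank = m ↔ Injective G.vecMul := by
  rw [vecMul_injective_iff, linearIndependent_iff_card_eq_finrank_span, rank_eq_finrank_span_row,
    Fintype.card_fin, eq_comm, Set.finrank]

theorem Matrix.card_fullRank_rowSpace_eq_card_injective_range (Q : Submodule K (n → K) → Prop) :
    Nat.card {G : Matrix (Fin m) n K // G.rank = m ∧ Q (Submodule.span K (Set.range G))} =
      Nat.card {φ : (Fin m → K) →ₗ[K] (n → K) // Injective φ ∧ Q (range φ)} :=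
  Nat.card_congr <| toMatrixRight'.symm.toEquiv.subtypeEquiv fun G =>
    and_congr G.rank_eq_iff_injective_vecMul <| by
      rw [show toMatrixRight'.symm.toEquiv G = G.vecMulLinear from rfl, range_vecMulLinear]; rfl

end RowSpace

theorem card_full_rank_matrices_with_fixed_intersection_dim_general
    {K : Type*} [Field K] [Fintype K]
    (k ℓ : ℕ)
    (U : Submodule K (Fin (k + ℓ) → K)) (hU : Module.finrank K U = ℓ)
    (p : ℕ) (hp : p ≤ min k ℓ) :
    (Nat.card {G : Matrix (Fin k) (Fin (k + ℓ)) K //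
        G.rank = k ∧
        Module.finrank K ↥(Submodule.span K (Set.range G) ⊓ U) = p} : ℝ)
      = (∏ j ∈ Finset.range k,
            ((Fintype.card K : ℝ) ^ k - (Fintype.card K : ℝ) ^ j))
          * gaussBinomial (Fintype.card K) ℓ p
          * gaussBinomial (Fintype.card K) k (k - p)
          * (Fintype.card K : ℝ) ^ ((ℓ - p) * (k - p)) := by
  have hpk : p ≤ k := hp.trans (min_le_left k ℓ)
  have hpℓ : p ≤ ℓ := hp.trans (min_le_right k ℓ)
  have hq : 1 < Fintype.card K := Fintype.one_lt_card
  have hcodim : finrank K (Fin (k + ℓ) → K) - finrank K U = k := by simp [hU]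
  rw [Matrix.card_fullRank_rowSpace_eq_card_injective_range fun W => finrank K ↥(W ⊓ U) = p,
    card_injective_finrank_range_inf_eq U (by rwa [hU]) (by rw [hcodim, finrank_fin_fun]; omega),
    hcodim, hU, Nat.cast_mul, Nat.cast_mul,
    card_submodule_finrank_eq_gaussBinomial (by rwa [finrank_fin_fun]), finrank_fin_fun]
  push_cast [Nat.cast_prod_range_pow_sub_pow hq.le (Nat.sub_le k p),
    Nat.cast_prod_range_pow_sub_pow hq.le hpℓ]
  have hexp : (k - p) * ℓ = (ℓ - p) * (k - p) + p * (k - p) := by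
    rw [← add_mul, Nat.sub_add_cancel hpℓ, mul_comm]
  rw [← gaussBinomial_mul_prod hq (Nat.sub_le k p), ← gaussBinomial_mul_prod hq hpℓ,
    prod_range_pow_sub_pow_eq_mul hpk, ← gaussBinomial_mul_prod hq hpk, hexp, pow_add]
  ring

/-- For a fixed `ℓ`-dimensional subspace `U ⊆ F_q^{k+ℓ}` and `0 ≤ p ≤ min(k,ℓ)`,
the number of `k × (k+ℓ)` matrices `G` over `F_q` of rank `k` whose row space `W`
satisfies `dim(W ∩ U) = p` equals
`∏_{j=0}^{k-1}(q^k - q^j) · [ℓ choose p]_q · [k choose k-p]_q · q^{(ℓ-p)(k-p)}`. -/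
theorem card_full_rank_matrices_with_fixed_intersection_dim
    {K : Type*} [Field K] [Fintype K]
    (k ℓ : ℕ) (hk : 0 < k) (hℓ : 0 < ℓ)
    (U : Submodule K (Fin (k + ℓ) → K)) (hU : Module.finrank K U = ℓ)
    (p : ℕ) (hp : p ≤ min k ℓ) :
    (Nat.card {G : Matrix (Fin k) (Fin (k + ℓ)) K //
        G.rank = k ∧
        Module.finrank K ↥(Submodule.span K (Set.range G) ⊓ U) = p} : ℝ)
      = (∏ j ∈ Finset.range k,
            ((Fintype.card K : ℝ) ^ k - (Fintype.card K : ℝ) ^ j))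
          * gaussBinomial (Fintype.card K) ℓ p
          * gaussBinomial (Fintype.card K) k (k - p)
          * (Fintype.card K : ℝ) ^ ((ℓ - p) * (k - p)) :=
  card_full_rank_matrices_with_fixed_intersection_dim_general k ℓ U hU p hp
end

section
/- Let q ≥ 2 be an integer and let k, t : ℕ → ℕ be functions with k(n) ≤ n, such that k(n)/n → R and t(n)/n → T as n → ∞, where 0 < R < 1, 0 < T, and T(q−1)/q < 1 − R. For each n set v(n) = ⌊t(n)(q−1)/q⌋. Then (1/n)·log_q [ q^{t(n)}·C(n, v(n)) / ( C(t(n), v(n))·(q−1)^{v(n)}·C(n−k(n), v(n)) ) ] → H(1, V) − H(1−R, V) as n → ∞, where V = T(q−1)/q, C(·,·) denotes the binomial coefficient, and H(F,G) := F log_q F − G log_q G − (F−G) log_q (F−G) with log_q the logarithm to base q. -/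
open Filter Real

/-- `H(F,G) = F log_q F - G log_q G - (F-G) log_q (F-G)`, the asymptotic exponent
of the binomial coefficient. -/
noncomputable def asympH (q : ℕ) (F G : ℝ) : ℝ :=
  F * Real.logb q F - G * Real.logb q G - (F - G) * Real.logb q (F - G)

/-!
Stirling's formula gives `log m! = m log m - m + o(m)`. Hence if `a(n)/n → A` and `w(n)/n → V`
with `0 < V < A`, the `n log n` terms cancel in `log C(a, w) = log a! - log w! - log (a-w)!` and
`(1/n) log_q C(a(n), w(n)) → H(A, V)`. Since `v ≈ t(q-1)/q` is the mean of `Bin(t, (q-1)/q)`,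
the term `C(t, v) (q-1)^v` equals `q^t` to first order in the exponent:
`H(T, V) = T - V log_q (q-1)` for `V = T(q-1)/q`. What remains is `H(1, V) - H(1-R, V)`.
-/

open scoped Nat Topology

theorem Stirling.tendsto_log_factorial_sub_div_self :
    Tendsto (fun m : ℕ => (log m ! - (m * log m - m)) / m) atTop (𝓝 0) := by
  have hseq : Tendsto (fun m : ℕ => log (stirlingSeq m) / m) atTop (𝓝 0) :=
    (tendsto_stirlingSeq_sqrt_pi.log (by positivity)).div_atTop tendsto_natCast_atTop_atTop
  have hlog : Tendsto (fun m : ℕ => log (2 * m) / (2 * m)) atTop (𝓝 0) :=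
    (isLittleO_log_id_atTop.comp_tendsto
      ((tendsto_natCast_atTop_atTop (R := ℝ)).const_mul_atTop two_pos)).tendsto_div_nhds_zero
  have hlim := hseq.add hlog
  rw [add_zero] at hlim
  refine hlim.congr' ?_
  filter_upwards [eventually_ne_atTop 0] with m hm
  rw [log_stirlingSeq_formula, log_div (by positivity) (exp_ne_zero 1), log_exp]
  field_simp
  ring

section

variable {a c w : ℕ → ℕ} {A C V : ℝ}

theorem tendsto_atTop_of_tendsto_div (hC : 0 < C)
    (hc : Tendsto (fun n => (c n : ℝ) / n) atTop (𝓝 C)) : Tendsto c atTop atTop := by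
  rw [← tendsto_natCast_atTop_iff (R := ℝ)]
  refine (tendsto_natCast_atTop_atTop.atTop_mul_pos hC hc).congr' ?_
  filter_upwards [eventually_ne_atTop 0] with n hn
  field_simp

theorem eventually_le_of_tendsto_div (hVA : V < A)
    (hw : Tendsto (fun n => (w n : ℝ) / n) atTop (𝓝 V))
    (ha : Tendsto (fun n => (a n : ℝ) / n) atTop (𝓝 A)) : ∀ᶠ n in atTop, w n ≤ a n := by
  filter_upwards [hw.eventually_lt ha hVA, eventually_gt_atTop 0] with n hn hn0
  exact_mod_cast (div_le_div_iff_of_pos_right (by positivity)).mp hn.le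

theorem tendsto_log_factorial_sub_div (hC : 0 < C)
    (hc : Tendsto (fun n => (c n : ℝ) / n) atTop (𝓝 C)) :
    Tendsto (fun n => (log (c n)! - c n * log n) / n) atTop (𝓝 (C * log C - C)) := by
  have hcT := tendsto_atTop_of_tendsto_div hC hc
  have hlim := ((Stirling.tendsto_log_factorial_sub_div_self.comp hcT).mul hc).add
    ((hc.mul (hc.log hC.ne')).sub hc)
  rw [zero_mul, zero_add] at hlim
  refine hlim.congr' ?_
  filter_upwards [hcT.eventually_ne_atTop 0, eventually_ne_atTop 0] with n hcn hn
  simp only [Function.comp_apply]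
  rw [log_div (by positivity) (by positivity)]
  field_simp
  ring

theorem tendsto_log_choose_div (hV : 0 < V) (hVA : V < A)
    (ha : Tendsto (fun n => (a n : ℝ) / n) atTop (𝓝 A))
    (hw : Tendsto (fun n => (w n : ℝ) / n) atTop (𝓝 V)) :
    Tendsto (fun n => log ((a n).choose (w n)) / n) atTop
      (𝓝 (A * log A - V * log V - (A - V) * log (A - V))) := by
  have hwa := eventually_le_of_tendsto_div hVA hw ha
  have hb : Tendsto (fun n => ((a n - w n : ℕ) : ℝ) / n) atTop (𝓝 (A - V)) := by
    refine (ha.sub hw).congr' ?_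
    filter_upwards [hwa] with n hn
    rw [Nat.cast_sub hn, sub_div]
  have hlim := ((tendsto_log_factorial_sub_div (hV.trans hVA) ha).sub
    (tendsto_log_factorial_sub_div hV hw)).sub (tendsto_log_factorial_sub_div (by linarith) hb)
  rw [show A * log A - V * log V - (A - V) * log (A - V)
    = A * log A - A - (V * log V - V) - ((A - V) * log (A - V) - (A - V)) by ring]
  refine hlim.congr' ?_
  filter_upwards [hwa] with n hn
  rw [Nat.cast_choose ℝ hn, log_div (by positivity) (by positivity),
    log_mul (by positivity) (by positivity), Nat.cast_sub hn]
  ring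

theorem tendsto_logb_choose_div (q : ℕ) (hV : 0 < V) (hVA : V < A)
    (ha : Tendsto (fun n => (a n : ℝ) / n) atTop (𝓝 A))
    (hw : Tendsto (fun n => (w n : ℝ) / n) atTop (𝓝 V)) :
    Tendsto (fun n => logb q ((a n).choose (w n)) / n) atTop (𝓝 (asympH q A V)) := by
  have hH : asympH q A V = (A * log A - V * log V - (A - V) * log (A - V)) / log q := by
    simp only [asympH, logb]
    ring
  rw [hH]
  refine ((tendsto_log_choose_div hV hVA ha hw).div_const (log q)).congr fun n => ?_
  rw [logb, div_right_comm]

theorem tendsto_natCast_div_div (m : ℕ)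
    (hc : Tendsto (fun n => (c n : ℝ) / n) atTop (𝓝 C)) :
    Tendsto (fun n => ((c n / m : ℕ) : ℝ) / n) atTop (𝓝 (C / m)) := by
  have hcp := hc.div_const m
  have hlow := hcp.sub (tendsto_const_div_atTop_nhds_zero_nat 1)
  rw [sub_zero] at hlow
  refine tendsto_of_tendsto_of_tendsto_of_le_of_le hlow hcp (fun n => ?_) (fun n => ?_)
  · rw [div_right_comm, ← sub_div, ← Nat.floor_div_eq_div (K := ℝ)]
    gcongr
    exact (Nat.sub_one_lt_floor _).le
  · rw [div_right_comm]
    gcongr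
    exact Nat.cast_div_le

end

theorem asympH_mul_sub_one_div {q : ℕ} (hq : 2 ≤ q) {T : ℝ} (hT : 0 < T) :
    asympH q T (T * (q - 1) / q) = T - T * (q - 1) / q * logb q (q - 1) := by
  have hq1 : (1 : ℝ) < q := by exact_mod_cast hq
  have hsub : T - T * (q - 1) / q = T / q := by field_simp; ring
  simp only [asympH, hsub]
  rw [logb_div (by positivity) (by positivity), logb_div (by positivity) (by positivity),
    logb_mul (by positivity) (by linarith), logb_self_eq_one hq1]
  field_simp
  ring

theorem logb_pow_mul_choose_div_eq {q n t m v : ℕ} (hq : 2 ≤ q) (hn : v ≤ n) (ht : v ≤ t)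
    (hm : v ≤ m) :
    logb q ((q : ℝ) ^ t * n.choose v / (t.choose v * ((q : ℝ) - 1) ^ v * m.choose v))
      = t + logb q (n.choose v) - (logb q (t.choose v) + v * logb q (q - 1))
        - logb q (m.choose v) := by
  have hq1 : (1 : ℝ) < q := by exact_mod_cast hq
  have hq0 : (q : ℝ) - 1 ≠ 0 := by linarith
  have hcn := Nat.cast_ne_zero (R := ℝ) |>.2 (Nat.choose_pos hn).ne'
  have hct := Nat.cast_ne_zero (R := ℝ) |>.2 (Nat.choose_pos ht).ne'
  have hcm := Nat.cast_ne_zero (R := ℝ) |>.2 (Nat.choose_pos hm).ne'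
  rw [logb_div (by positivity) (by positivity), logb_mul (by positivity) hcn,
    logb_mul (by positivity) hcm, logb_mul hct (by positivity), logb_pow, logb_pow,
    logb_self_eq_one hq1]
  ring

theorem randomPrange_asymptotics_general
    (q : ℕ) (hq : 2 ≤ q) (k t : ℕ → ℕ) (hk : ∀ n, k n ≤ n)
    (R T : ℝ) (hR0 : 0 < R) (hT : 0 < T)
    (hTR : T * ((q : ℝ) - 1) / q < 1 - R)
    (hkR : Tendsto (fun n => (k n : ℝ) / n) atTop (nhds R))
    (htT : Tendsto (fun n => (t n : ℝ) / n) atTop (nhds T))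
    (v : ℕ → ℕ) (hv : ∀ n, v n = t n * (q - 1) / q) :
    Tendsto (fun n =>
        Real.logb q ((q : ℝ) ^ t n * (Nat.choose n (v n) : ℝ)
          / ((Nat.choose (t n) (v n) : ℝ) * ((q : ℝ) - 1) ^ v n
              * (Nat.choose (n - k n) (v n) : ℝ))) / n)
      atTop
      (nhds (asympH q 1 (T * ((q : ℝ) - 1) / q)
        - asympH q (1 - R) (T * ((q : ℝ) - 1) / q))) := by
  obtain rfl : v = fun n => t n * (q - 1) / q := funext hv
  set V : ℝ := T * ((q : ℝ) - 1) / q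
  have hq1 : (1 : ℝ) < q := by exact_mod_cast hq
  have hV0 : 0 < V := div_pos (mul_pos hT (by linarith)) (by linarith)
  have hVT : V < T := by
    rw [div_lt_iff₀ (by linarith)]
    nlinarith
  have hvV : Tendsto (fun n => ((t n * (q - 1) / q : ℕ) : ℝ) / n) atTop (𝓝 V) := by
    refine tendsto_natCast_div_div q ((htT.mul_const ((q : ℝ) - 1)).congr fun n => ?_)
    push_cast [Nat.cast_sub (by omega : 1 ≤ q)]
    ring
  have hn : Tendsto (fun n : ℕ => (n : ℝ) / n) atTop (𝓝 1) :=
    tendsto_const_nhds.congr' <| (eventually_ne_atTop 0).mono fun n hn => by field_simp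
  have hnk : Tendsto (fun n => ((n - k n : ℕ) : ℝ) / n) atTop (𝓝 (1 - R)) :=
    (hn.sub hkR).congr fun n => by rw [Nat.cast_sub (hk n), sub_div]
  have hV1 : V < 1 := by linarith
  have hlim := ((htT.add (tendsto_logb_choose_div q hV0 hV1 hn hvV)).sub
    ((tendsto_logb_choose_div q hV0 hVT htT hvV).add (hvV.mul_const (logb q (q - 1))))).sub
    (tendsto_logb_choose_div q hV0 hTR hnk hvV)
  rw [asympH_mul_sub_one_div hq hT, sub_add_cancel, add_sub_cancel_left] at hlim
  refine hlim.congr' ?_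
  filter_upwards [eventually_le_of_tendsto_div hV1 hvV hn, eventually_le_of_tendsto_div hVT hvV htT,
    eventually_le_of_tendsto_div hTR hvV hnk] with n h1 h2 h3
  rw [logb_pow_mul_choose_div_eq hq h1 h2 h3]
  ring

/-- Asymptotic exponent of Random Prange: with `v(n) = ⌊t(n)(q-1)/q⌋`,
`(1/n) log_q [ q^{t(n)} C(n, v(n)) / (C(t(n), v(n)) (q-1)^{v(n)} C(n-k(n), v(n))) ]`
tends to `H(1, V) - H(1-R, V)` where `V = T(q-1)/q`. -/
theorem randomPrange_asymptotics
    (q : ℕ) (hq : 2 ≤ q) (k t : ℕ → ℕ) (hk : ∀ n, k n ≤ n)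
    (R T : ℝ) (hR0 : 0 < R) (hR1 : R < 1) (hT : 0 < T)
    (hTR : T * ((q : ℝ) - 1) / q < 1 - R)
    (hkR : Tendsto (fun n => (k n : ℝ) / n) atTop (nhds R))
    (htT : Tendsto (fun n => (t n : ℝ) / n) atTop (nhds T))
    (v : ℕ → ℕ) (hv : ∀ n, v n = t n * (q - 1) / q) :
    Tendsto (fun n =>
        Real.logb q ((q : ℝ) ^ t n * (Nat.choose n (v n) : ℝ)
          / ((Nat.choose (t n) (v n) : ℝ) * ((q : ℝ) - 1) ^ v n
              * (Nat.choose (n - k n) (v n) : ℝ))) / n)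
      atTop
      (nhds (asympH q 1 (T * ((q : ℝ) - 1) / q)
        - asympH q (1 - R) (T * ((q : ℝ) - 1) / q))) :=
  randomPrange_asymptotics_general q hq k t hk R T hR0 hT hTR hkR htT v hv
end
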